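/- For the maximally entangled state ρ₀ = |Φ⟩⟨Φ| of local dimension d_s subjected to the 'global dephasing' map ρ = (1−ε)ρ₀ + (ε/d_s) Σ_i |ii⟩⟨ii|, 0 ≤ ε ≤ 1, one has ‖ρ^{T_B}‖₁ = d_s − (d_s−1)ε, hence E_N(ρ) − E_N(ρ₀) = log₂[1 − (1 − 1/d_s) ε]. -/

import Mathlib

/-!
The partial transpose of `ρ` is the swap permutation `|ij⟩ ↦ |ji⟩` times the diagonal matrix with
entries `(1 - ε)/d + [i = j] ε/d`. Hence `(ρ^{T_B})ᴴ ρ^{T_B}` is the square of a diagonal matrix,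
and the trace norm is the sum of the absolute values of those entries. For `ε ≤ 1` the entries are
nonnegative and sum to `d (1 - ε) + ε`. The case `ε = 0` gives `‖ρ₀^{T_B}‖₁ = d`.
-/

open Matrix
open scoped ComplexOrder

/-- Trace norm ‖A‖₁ = Tr √(AᴴA). -/
noncomputable def traceNorm {n : Type*} [Fintype n] [DecidableEq n]
    (A : Matrix n n ℂ) : ℝ :=
  (((Matrix.posSemidef_conjTranspose_mul_self A).1.eigenvectorUnitary.1 *
      diagonal (((↑) : ℝ → ℂ) ∘ (√·) ∘ (Matrix.posSemidef_conjTranspose_mul_self A).1.eigenvalues) *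
      (star (Matrix.posSemidef_conjTranspose_mul_self A).1.eigenvectorUnitary :
        Matrix n n ℂ)).trace).re

/-- Partial transpose over the B factor. -/
def ptB {a b : Type*} (M : Matrix (a × b) (a × b) ℂ) : Matrix (a × b) (a × b) ℂ :=
  Matrix.of fun p q => M (p.1, q.2) (q.1, p.2)

/-- |Φ⟩⟨Φ| = (1/d) Σ_{ij} |ii⟩⟨jj|, the maximally entangled state of local dimension d. -/
noncomputable def maxEnt (d : ℕ) : Matrix (Fin d × Fin d) (Fin d × Fin d) ℂ :=
  Matrix.of fun p q => if p.1 = p.2 ∧ q.1 = q.2 then ((d : ℂ))⁻¹ else 0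

/-- Σᵢ |ii⟩⟨ii|, the diagonal correlation projector. -/
def diagCorr (d : ℕ) : Matrix (Fin d × Fin d) (Fin d × Fin d) ℂ :=
  Matrix.of fun p q => if p.1 = p.2 ∧ q = p then 1 else 0

section
open scoped MatrixOrder

theorem traceNorm_eq_re_trace_of_mul_self_eq {n : Type*} [Fintype n] [DecidableEq n]
    {A B : Matrix n n ℂ} (hB : B.PosSemidef) (h : B * B = Aᴴ * A) :
    traceNorm A = B.trace.re := by
  have hAA := Matrix.posSemidef_conjTranspose_mul_self A
  have hsqrt : cfc Real.sqrt (Aᴴ * A) = B := by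
    rw [← cfcₙ_eq_cfc, ← CFC.sqrt_eq_real_sqrt _ hAA.nonneg]
    exact CFC.sqrt_unique h hB.nonneg
  rw [← hsqrt, hAA.1.cfc_eq]
  rfl

end

theorem traceNorm_submatrix_diagonal {n : Type*} [Fintype n] [DecidableEq n]
    (e : n ≃ n) (f : n → ℂ) :
    traceNorm ((diagonal f).submatrix e id) = ∑ i, ‖f i‖ := by
  have hB : (diagonal fun i => (‖f i‖ : ℂ)).PosSemidef :=
    posSemidef_diagonal_iff.mpr fun i => by positivity
  rw [traceNorm_eq_re_trace_of_mul_self_eq hB, trace_diagonal, Complex.re_sum]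
  · simp
  · rw [conjTranspose_submatrix, submatrix_mul_equiv, diagonal_conjTranspose, diagonal_mul_diagonal,
      diagonal_mul_diagonal, submatrix_id_id]
    congr 1
    ext i
    rw [← sq, ← Complex.mul_conj', mul_comm]
    rfl

theorem ptB_dephased_maxEnt (d : ℕ) (ε : ℝ) :
    ptB (((1 - ε : ℝ) : ℂ) • maxEnt d + ((ε / d : ℝ) : ℂ) • diagCorr d) =
      (diagonal fun p : Fin d × Fin d =>
        (((1 - ε) / d + if p.1 = p.2 then ε / d else 0 : ℝ) : ℂ)).submatrix
        (Equiv.prodComm _ _) id := by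
  ext ⟨m, n⟩ ⟨i, j⟩
  simp only [ptB, maxEnt, diagCorr, Matrix.add_apply, Matrix.smul_apply, of_apply, submatrix_apply,
    id, Equiv.prodComm_apply, Prod.swap_prod_mk, diagonal_apply, Prod.mk.injEq]
  by_cases h : n = i ∧ m = j
  · obtain ⟨rfl, rfl⟩ := h
    simp only [true_and, and_self, if_true, smul_eq_mul]
    split_ifs <;> push_cast <;> ring
  · have h₁ : ¬(m = j ∧ i = n) := fun ⟨hmj, hin⟩ => h ⟨hin.symm, hmj⟩
    have h₂ : ¬(m = j ∧ i = m ∧ n = j) := fun ⟨hmj, him, hnj⟩ =>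
      h ⟨hnj.trans (him.trans hmj).symm, hmj⟩
    rw [if_neg h, if_neg h₁, if_neg h₂, smul_zero, smul_zero, add_zero]

theorem sum_dephasing_weights (d : ℕ) (hd : 0 < d) (ε : ℝ) (hε : ε ≤ 1) :
    ∑ p : Fin d × Fin d, ‖(((1 - ε) / d + if p.1 = p.2 then ε / d else 0 : ℝ) : ℂ)‖ =
      d - (d - 1) * ε := by
  have hd0 : (d : ℝ) ≠ 0 := by positivity
  have hnonneg (p : Fin d × Fin d) : 0 ≤ (1 - ε) / d + if p.1 = p.2 then ε / d else 0 := by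
    split_ifs
    · rw [← add_div, sub_add_cancel]; positivity
    · rw [add_zero]; exact div_nonneg (by linarith) (Nat.cast_nonneg d)
  simp only [Complex.norm_real, Real.norm_of_nonneg (hnonneg _), Finset.sum_add_distrib,
    Finset.sum_const, Finset.card_univ, Fintype.card_prod, Fintype.card_fin, Fintype.sum_prod_type,
    Finset.sum_ite_eq, Finset.mem_univ, if_true, nsmul_eq_mul, Nat.cast_mul]
  field_simp
  ring

theorem traceNorm_ptB_dephased_maxEnt (d : ℕ) (hd : 0 < d) (ε : ℝ) (hε : ε ≤ 1) :
    traceNorm (ptB (((1 - ε : ℝ) : ℂ) • maxEnt d + ((ε / d : ℝ) : ℂ) • diagCorr d)) =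
      d - (d - 1) * ε := by
  rw [ptB_dephased_maxEnt, traceNorm_submatrix_diagonal, sum_dephasing_weights d hd ε hε]

theorem maxEnt_dephasing_negativity_general (d : ℕ) (hd : 0 < d)
    (ε : ℝ) (hε1 : ε ≤ 1)
    (ρ : Matrix (Fin d × Fin d) (Fin d × Fin d) ℂ)
    (hρ : ρ = ((1 - ε : ℝ) : ℂ) • maxEnt d + ((ε / d : ℝ) : ℂ) • diagCorr d) :
    traceNorm (ptB ρ) = d - (d - 1) * ε
      ∧ Real.logb 2 (traceNorm (ptB ρ)) - Real.logb 2 (traceNorm (ptB (maxEnt d)))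
          = Real.logb 2 (1 - (1 - 1 / (d : ℝ)) * ε) := by
  have hnorm : traceNorm (ptB ρ) = d - (d - 1) * ε :=
    hρ ▸ traceNorm_ptB_dephased_maxEnt d hd ε hε1
  have hnorm₀ : traceNorm (ptB (maxEnt d)) = d := by
    simpa using traceNorm_ptB_dephased_maxEnt d hd 0 zero_le_one
  have hd' : (1 : ℝ) ≤ d := by exact_mod_cast hd
  have hpos : 0 < (d : ℝ) - (d - 1) * ε := by nlinarith
  refine ⟨hnorm, ?_⟩
  rw [hnorm, hnorm₀, ← Real.logb_div hpos.ne' (by positivity)]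
  congr 1
  field_simp

/-- for the maximally entangled state under global dephasing
ρ = (1−ε)|Φ⟩⟨Φ| + (ε/d_s) Σᵢ|ii⟩⟨ii|, 0 ≤ ε ≤ 1, one has ‖ρ^{T_B}‖₁ = d_s − (d_s−1)ε,
hence E_N(ρ) − E_N(ρ₀) = log₂[1 − (1 − 1/d_s)ε]. -/
theorem maxEnt_dephasing_negativity (d : ℕ) (hd : 0 < d)
    (ε : ℝ) (hε0 : 0 ≤ ε) (hε1 : ε ≤ 1)
    (ρ : Matrix (Fin d × Fin d) (Fin d × Fin d) ℂ)
    (hρ : ρ = ((1 - ε : ℝ) : ℂ) • maxEnt d + ((ε / d : ℝ) : ℂ) • diagCorr d) :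
    traceNorm (ptB ρ) = d - (d - 1) * ε
      ∧ Real.logb 2 (traceNorm (ptB ρ)) - Real.logb 2 (traceNorm (ptB (maxEnt d)))
          = Real.logb 2 (1 - (1 - 1 / (d : ℝ)) * ε) :=
  maxEnt_dephasing_negativity_general d hd ε hε1 ρ hρ
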